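/- arXiv:2506.02755 — 3 statements merged into one kernel-verified Lean document; each statement's English description precedes it below -/
import Mathlib

section
/- For every integer k ≥ 1, the integral of 1/√((1-r₁)(r₁-r₂)⋯(r_{k-1}-r_k)) over the simplex 0 < r_k < ⋯ < r₁ < 1 equals Γ(1/2)^k / Γ((k+2)/2). -/
/-!
Integrate out the smallest coordinate first. For fixed `r₀ > ⋯ > r_{n-1}` the innermost
integral `∫₀^{r_{n-1}} rₙ^a (r_{n-1} - rₙ)^{-1/2} drₙ` is a scaled Beta integral, equal to
`r_{n-1}^{a+1/2} B(a+1, 1/2)`. So the integral carrying the extra weight `rₙ^a` satisfies a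
recursion in the number of variables with `a ↦ a + 1/2`, along which the Gamma factors of the
Beta functions telescope; the theorem is the case `a = 0`.
-/

open MeasureTheory Real Set ProbabilityTheory
open scoped ENNReal

theorem integral_rpow_mul_sub_rpow_eq_beta {p q s : ℝ} (hp : 0 < p) (hq : 0 < q) (hs : 0 < s) :
    ∫ x in 0..s, x ^ (p - 1) * (s - x) ^ (q - 1) = s ^ (p + q - 1) * beta p q := by
  apply Complex.ofReal_injective
  have hbeta : (beta p q : ℂ) = Complex.betaIntegral p q := by
    rw [Complex.betaIntegral_eq_Gamma_mul_div _ _ (by simpa) (by simpa), beta]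
    push_cast [← Complex.Gamma_ofReal]
    rfl
  rw [← intervalIntegral.integral_ofReal, Complex.ofReal_mul, hbeta,
    Complex.ofReal_cpow hs.le]
  push_cast
  rw [← Complex.betaIntegral_scaled _ _ hs]
  refine intervalIntegral.integral_congr fun x hx => ?_
  rw [uIcc_of_le hs.le] at hx
  push_cast [Complex.ofReal_cpow hx.1, Complex.ofReal_cpow (sub_nonneg.2 hx.2)]
  rfl

theorem setLIntegral_Ioo_rpow_mul_sub_rpow {p q s : ℝ} (hp : 0 < p) (hq : 0 < q) (hs : 0 < s) :
    ∫⁻ x in Ioo 0 s, ENNReal.ofReal (x ^ (p - 1) * (s - x) ^ (q - 1))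
      = ENNReal.ofReal (s ^ (p + q - 1) * beta p q) := by
  have hpos : 0 < s ^ (p + q - 1) * beta p q := mul_pos (rpow_pos_of_pos hs _) (beta_pos hp hq)
  -- a non-integrable function would have interval integral `0`
  have hint : IntervalIntegrable (fun x => x ^ (p - 1) * (s - x) ^ (q - 1)) volume 0 s :=
    intervalIntegral.intervalIntegrable_of_integral_ne_zero
      (integral_rpow_mul_sub_rpow_eq_beta hp hq hs ▸ hpos.ne')
  rw [← integral_rpow_mul_sub_rpow_eq_beta hp hq hs, intervalIntegral.integral_of_le hs.le,
    integral_Ioc_eq_integral_Ioo, ofReal_integral_eq_lintegral_ofReal]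
  · exact (hint.1).mono_set Ioo_subset_Ioc_self
  · filter_upwards [ae_restrict_mem measurableSet_Ioo] with x hx
    exact mul_nonneg (rpow_nonneg hx.1.le _) (rpow_nonneg (sub_nonneg.2 hx.2.le) _)

theorem lintegral_pi_eq_lintegral_lintegral_snoc {α : Type*} [MeasurableSpace α] (μ : Measure α)
    [SigmaFinite μ] {n : ℕ} {f : (Fin (n + 1) → α) → ℝ≥0∞} (hf : Measurable f) :
    ∫⁻ r, f r ∂Measure.pi (fun _ => μ)
      = ∫⁻ y, ∫⁻ x, f (Fin.snoc y x) ∂μ ∂Measure.pi (fun _ => μ) := by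
  let e := MeasurableEquiv.piFinSuccAbove (fun _ : Fin (n + 1) => α) (Fin.last n)
  rw [← ((measurePreserving_piFinSuccAbove (fun _ => μ) (Fin.last n)).symm e).lintegral_comp_emb
    e.symm.measurableEmbedding,
    lintegral_prod_symm' (fun p => f (e.symm p)) (hf.comp e.symm.measurable)]
  simp only [e, MeasurableEquiv.piFinSuccAbove_symm_apply, Fin.insertNthEquiv_last]
  rfl

def orderedSimplex (n : ℕ) : Set (Fin n → ℝ) :=
  {r | (∀ i, 0 < r i ∧ r i < 1) ∧ StrictAnti r}

theorem measurableSet_orderedSimplex (n : ℕ) : MeasurableSet (orderedSimplex n) := by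
  simp only [orderedSimplex, StrictAnti, ofPred_and, ofPred_forall]
  measurability

theorem snoc_mem_orderedSimplex_iff {n : ℕ} {y : Fin (n + 1) → ℝ} {x : ℝ} :
    (Fin.snoc y x : Fin (n + 2) → ℝ) ∈ orderedSimplex (n + 2)
      ↔ y ∈ orderedSimplex (n + 1) ∧ x ∈ Ioo 0 (y (Fin.last n)) := by
  simp only [orderedSimplex, mem_ofPred_eq, Fin.strictAnti_iff_succ_lt, Fin.forall_fin_succ',
    Fin.snoc_castSucc, Fin.snoc_last, Fin.succ_castSucc, Fin.succ_last, mem_Ioo]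
  exact ⟨fun h => ⟨⟨h.1.1, h.2.1⟩, h.1.2.1, h.2.2⟩,
    fun h => ⟨⟨h.1.1, h.2.1, h.2.2.trans h.1.1.2.2⟩, h.1.2, h.2.2⟩⟩

def gapProd {n : ℕ} (r : Fin (n + 1) → ℝ) : ℝ :=
  (1 - r 0) * ∏ i : Fin n, (r i.castSucc - r i.succ)

@[fun_prop]
theorem measurable_gapProd (n : ℕ) : Measurable (gapProd (n := n)) := by
  unfold gapProd; fun_prop

theorem gapProd_snoc {n : ℕ} (y : Fin (n + 1) → ℝ) (x : ℝ) :
    gapProd (Fin.snoc y x : Fin (n + 2) → ℝ) = gapProd y * (y (Fin.last n) - x) := by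
  have h0 : (Fin.snoc y x : Fin (n + 2) → ℝ) 0 = y 0 := Fin.snoc_castSucc (i := 0) ..
  simp only [gapProd, Fin.prod_univ_castSucc (n := n), Fin.snoc_castSucc, Fin.snoc_last,
    Fin.succ_castSucc, Fin.succ_last, h0, mul_assoc]

theorem gapProd_pos {n : ℕ} {r : Fin (n + 1) → ℝ} (hr : r ∈ orderedSimplex (n + 1)) :
    0 < gapProd r :=
  mul_pos (sub_pos.2 (hr.1 0).2) (Finset.prod_pos fun i _ => sub_pos.2 (hr.2 i.castSucc_lt_succ))

theorem setLIntegral_orderedSimplex_succ {n : ℕ} {f : (Fin (n + 2) → ℝ) → ℝ≥0∞}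
    (hf : Measurable f) :
    ∫⁻ r in orderedSimplex (n + 2), f r
      = ∫⁻ y in orderedSimplex (n + 1),
          ∫⁻ x in Ioo 0 (y (Fin.last n)), f (Fin.snoc y x) := by
  rw [← lintegral_indicator (measurableSet_orderedSimplex _), volume_pi,
    lintegral_pi_eq_lintegral_lintegral_snoc _ (hf.indicator (measurableSet_orderedSimplex _)),
    ← volume_pi, ← lintegral_indicator (measurableSet_orderedSimplex _)]
  refine lintegral_congr fun y => ?_
  by_cases hy : y ∈ orderedSimplex (n + 1)
  · rw [indicator_of_mem hy, ← lintegral_indicator measurableSet_Ioo]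
    congr 1 with x
    classical
    simp only [indicator_apply, snoc_mem_orderedSimplex_iff, hy, true_and]
  · simp [snoc_mem_orderedSimplex_iff, hy]

theorem setLIntegral_orderedSimplex_one {f : (Fin 1 → ℝ) → ℝ≥0∞} (hf : Measurable f) :
    ∫⁻ r in orderedSimplex 1, f r = ∫⁻ x in Ioo 0 1, f (fun _ => x) := by
  rw [← lintegral_indicator (measurableSet_orderedSimplex _), volume_pi,
    lintegral_pi_eq_lintegral_lintegral_snoc _ (hf.indicator (measurableSet_orderedSimplex _)),
    lintegral_unique, Measure.pi_univ, ← lintegral_indicator measurableSet_Ioo]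
  have hmem (x : ℝ) : (fun _ => x : Fin 1 → ℝ) ∈ orderedSimplex 1 ↔ x ∈ Ioo 0 1 :=
    ⟨fun h => (h.1 0), fun h => ⟨fun _ => h, Subsingleton.strictAnti _⟩⟩
  classical
  simp [Fin.snoc_zero, indicator_apply, hmem]

theorem setLIntegral_Ioo_rpow_mul_inv_sqrt_sub {a s : ℝ} (ha : -1 < a) (hs : 0 < s) :
    ∫⁻ x in Ioo 0 s, ENNReal.ofReal (x ^ a * (√(s - x))⁻¹)
      = ENNReal.ofReal (s ^ (a + 1 / 2) * beta (a + 1) (1 / 2)) := by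
  rw [show a + 1 / 2 = a + 1 + 1 / 2 - 1 by ring,
    ← setLIntegral_Ioo_rpow_mul_sub_rpow (by linarith) one_half_pos hs]
  refine setLIntegral_congr_fun measurableSet_Ioo fun x hx => ?_
  rw [sqrt_eq_rpow, ← rpow_neg (sub_nonneg.2 hx.2.le)]
  norm_num

theorem setLIntegral_rpow_mul_inv_sqrt_gapProd_snoc {n : ℕ} {a : ℝ} (ha : -1 < a)
    {y : Fin (n + 1) → ℝ} (hy : y ∈ orderedSimplex (n + 1)) :
    ∫⁻ x in Ioo 0 (y (Fin.last n)),
        ENNReal.ofReal (x ^ a * (√(gapProd (Fin.snoc y x : Fin (n + 2) → ℝ)))⁻¹)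
      = ENNReal.ofReal (y (Fin.last n) ^ (a + 1 / 2) * (√(gapProd y))⁻¹)
          * ENNReal.ofReal (beta (a + 1) (1 / 2)) := by
  have hg := gapProd_pos hy
  have hlast : 0 < y (Fin.last n) := (hy.1 _).1
  calc _ = ∫⁻ x in Ioo 0 (y (Fin.last n)), ENNReal.ofReal ((√(gapProd y))⁻¹)
              * ENNReal.ofReal (x ^ a * (√(y (Fin.last n) - x))⁻¹) := by
        refine setLIntegral_congr_fun measurableSet_Ioo fun x hx => ?_
        rw [gapProd_snoc, sqrt_mul hg.le, mul_inv, ← ENNReal.ofReal_mul (by positivity),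
          mul_left_comm]
    _ = _ := by
        rw [lintegral_const_mul' _ _ ENNReal.ofReal_ne_top,
          setLIntegral_Ioo_rpow_mul_inv_sqrt_sub ha hlast, ← ENNReal.ofReal_mul (by positivity),
          ← ENNReal.ofReal_mul' (beta_pos (by linarith) one_half_pos).le]
        ring_nf

theorem setLIntegral_orderedSimplex_rpow_last_mul_inv_sqrt_gapProd (n : ℕ) {a : ℝ}
    (ha : -1 < a) :
    ∫⁻ r in orderedSimplex (n + 1), ENNReal.ofReal (r (Fin.last n) ^ a * (√(gapProd r))⁻¹)
      = ENNReal.ofReal (Gamma (a + 1) * Gamma (1 / 2) ^ (n + 1) / Gamma (a + 1 + (n + 1) / 2)) := by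
  induction n generalizing a with
  | zero =>
    rw [setLIntegral_orderedSimplex_one (by fun_prop)]
    simp only [gapProd, Finset.univ_eq_empty, Finset.prod_empty, mul_one]
    rw [setLIntegral_Ioo_rpow_mul_inv_sqrt_sub ha one_pos, one_rpow, one_mul, beta]
    norm_num
  | succ n ih =>
    rw [setLIntegral_orderedSimplex_succ (by fun_prop)]
    simp only [Fin.snoc_last]
    rw [setLIntegral_congr_fun (measurableSet_orderedSimplex _)
        fun y hy => setLIntegral_rpow_mul_inv_sqrt_gapProd_snoc ha hy,
      lintegral_mul_const' _ _ ENNReal.ofReal_ne_top, ih (by linarith),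
      ← ENNReal.ofReal_mul' (beta_pos (by linarith) one_half_pos).le, beta]
    have hΓ : Gamma (a + 1 + 1 / 2) ≠ 0 := (Gamma_pos_of_pos (by linarith)).ne'
    rw [show a + 1 / 2 + 1 = a + 1 + 1 / 2 by ring,
      show a + 1 + 1 / 2 + ((n : ℝ) + 1) / 2 = a + 1 + ((n + 1 : ℕ) + 1) / 2 by push_cast; ring]
    congr 1
    generalize Gamma (a + 1 + 1 / 2) = G at hΓ ⊢
    field_simp
    ring

/-- For every `k ≥ 1` (encoded as `k+1` variables), the integral of
`1/√((1-r₁)(r₁-r₂)⋯(r_{k-1}-r_k))` over the ordered simplex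
`0 < r_k < ⋯ < r₁ < 1` equals `Γ(1/2)^k / Γ((k+2)/2)`. -/
theorem simplex_gamma_identity (k : ℕ) :
    (∫ r : Fin (k + 1) → ℝ in
        {r | (∀ i, 0 < r i ∧ r i < 1) ∧ ∀ i j : Fin (k + 1), i < j → r j < r i},
        (Real.sqrt ((1 - r 0) * ∏ i : Fin k, (r i.castSucc - r i.succ)))⁻¹)
      = Real.Gamma (1 / 2) ^ (k + 1) / Real.Gamma ((k + 1 + 2) / 2) := by
  have h := setLIntegral_orderedSimplex_rpow_last_mul_inv_sqrt_gapProd k (a := 0) (by norm_num)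
  simp only [rpow_zero, one_mul, zero_add, Gamma_one] at h
  change ∫ r in orderedSimplex (k + 1), (√(gapProd r))⁻¹ = _
  rw [integral_eq_lintegral_of_nonneg_ae (ae_of_all _ fun r => by positivity) (by fun_prop), h,
    ENNReal.toReal_ofReal (by positivity)]
  congr 2
  ring
end

section
/- For every λ ≥ 0, the series ∑_{n=1}^∞ λ^{n-1} / Γ((n+1)/2) converges and equals 2 e^{λ²} ∫_{-∞}^{√2 λ} (1/√(2π)) e^{-y²/2} dy. -/
open MeasureTheory Real
open scoped Nat

/-!
The even terms are `l ^ (2k) / k!`, summing to `exp (l²)`. For the odd terms write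
`exp (l²) ∫₀ˡ exp (-t²) dt = ∫₀ˡ exp (l² - t²) dt` and expand the exponential under the integral:
the `k`-th term is `W_k / k!` with `W_k = ∫₀ˡ (l² - t²)ᵏ dt = (√π / 2) k! l^(2k+1) / Γ(k + 3/2)`,
which follows from the recurrence `(2k + 3) W_{k+1} = 2 (k + 1) l² W_k` obtained by
differentiating `t (l² - t²)^(k+1)`. Finally, splitting the Gaussian integral at `0` and
substituting `y = √2 t` gives `1/2 + π^(-1/2) ∫₀ˡ exp (-t²) dt`.
-/

theorem hasSum_pow_two_mul_div_factorial (x : ℝ) :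
    HasSum (fun k : ℕ => x ^ (2 * k) / k !) (exp (x ^ 2)) := by
  simpa only [pow_mul, exp_eq_exp_ℝ] using NormedSpace.expSeries_div_hasSum_exp (x ^ 2)

theorem Gamma_three_div_two : Gamma (3 / 2) = √π / 2 := by
  rw [show (3 / 2 : ℝ) = 1 / 2 + 1 by norm_num, Gamma_add_one (by norm_num), Gamma_one_half_eq]
  ring

theorem integral_sq_sub_sq_pow_succ (l : ℝ) (k : ℕ) :
    (2 * k + 3) * ∫ t in 0..l, (l ^ 2 - t ^ 2) ^ (k + 1) =
      2 * (k + 1) * l ^ 2 * ∫ t in 0..l, (l ^ 2 - t ^ 2) ^ k := by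
  have hderiv : ∀ t ∈ Set.uIcc 0 l, HasDerivAt (fun t => t * (l ^ 2 - t ^ 2) ^ (k + 1))
      ((2 * k + 3) * (l ^ 2 - t ^ 2) ^ (k + 1) - 2 * (k + 1) * l ^ 2 * (l ^ 2 - t ^ 2) ^ k) t := by
    intro t _
    refine ((hasDerivAt_id' t).fun_mul
      (((hasDerivAt_pow 2 t).const_sub (l ^ 2)).fun_pow (k + 1))).congr_deriv ?_
    rw [Nat.add_sub_cancel]
    push_cast
    ring
  have hftc := intervalIntegral.integral_eq_sub_of_hasDerivAt hderiv
    (Continuous.intervalIntegrable (by fun_prop) _ _)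
  rw [intervalIntegral.integral_sub (Continuous.intervalIntegrable (by fun_prop) _ _)
    (Continuous.intervalIntegrable (by fun_prop) _ _), intervalIntegral.integral_const_mul,
    intervalIntegral.integral_const_mul] at hftc
  simp only [sub_self, zero_pow k.succ_ne_zero, mul_zero, zero_mul] at hftc
  linarith

theorem integral_sq_sub_sq_pow (l : ℝ) (k : ℕ) :
    ∫ t in 0..l, (l ^ 2 - t ^ 2) ^ k = √π / 2 * k ! * l ^ (2 * k + 1) / Gamma (k + 3 / 2) := by
  induction k with
  | zero => simp [Gamma_three_div_two, (by positivity : √π ≠ 0)]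
  | succ k ih =>
    have hΓ : Gamma ((k + 1 : ℕ) + 3 / 2) = (k + 3 / 2) * Gamma (k + 3 / 2) := by
      rw [Nat.cast_succ, add_right_comm, Gamma_add_one (by positivity)]
    rw [← mul_right_inj' (by positivity : (2 * k + 3 : ℝ) ≠ 0), integral_sq_sub_sq_pow_succ, ih, hΓ,
      Nat.factorial_succ]
    push_cast
    field_simp
    ring

theorem hasSum_integral_sq_sub_sq_pow_div_factorial (l : ℝ) :
    HasSum (fun k : ℕ => ∫ t in 0..l, (l ^ 2 - t ^ 2) ^ k / k !)
      (∫ t in 0..l, exp (l ^ 2 - t ^ 2)) := by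
  refine intervalIntegral.hasSum_integral_of_dominated_convergence (fun k _ => l ^ (2 * k) / k !)
    (fun k => Continuous.aestronglyMeasurable (by fun_prop))
    (fun k => ae_of_all _ fun t ht => ?_)
    (ae_of_all _ fun _ _ => (hasSum_pow_two_mul_div_factorial l).summable)
    intervalIntegrable_const
    (ae_of_all _ fun t _ => ?_)
  · obtain ⟨h0, hle⟩ : 0 ≤ l ^ 2 - t ^ 2 ∧ l ^ 2 - t ^ 2 ≤ l ^ 2 := by
      rcases Set.mem_uIoc.mp ht with ⟨ht₀, htl⟩ | ⟨hlt, ht₀⟩ <;> constructor <;> nlinarith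
    rw [norm_of_nonneg (by positivity), pow_mul]
    gcongr
  · simpa only [exp_eq_exp_ℝ] using NormedSpace.expSeries_div_hasSum_exp (l ^ 2 - t ^ 2)

theorem hasSum_pow_two_mul_add_one_div_Gamma (l : ℝ) :
    HasSum (fun k : ℕ => l ^ (2 * k + 1) / Gamma (k + 3 / 2))
      (2 / √π * exp (l ^ 2) * ∫ t in 0..l, exp (-t ^ 2)) := by
  have hexp : exp (l ^ 2) * ∫ t in 0..l, exp (-t ^ 2) = ∫ t in 0..l, exp (l ^ 2 - t ^ 2) := by
    simp only [← intervalIntegral.integral_const_mul, ← exp_add, sub_eq_add_neg]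
  rw [mul_assoc, hexp]
  have h : HasSum (fun k : ℕ => 2 / √π * ∫ t in 0..l, (l ^ 2 - t ^ 2) ^ k / k !)
      (2 / √π * ∫ t in 0..l, exp (l ^ 2 - t ^ 2)) :=
    (hasSum_integral_sq_sub_sq_pow_div_factorial l).mul_left _
  convert h using 2 with k
  rw [intervalIntegral.integral_div, integral_sq_sub_sq_pow]
  field_simp

theorem integral_Iic_gaussian_sqrt_two_mul (l : ℝ) :
    ∫ y in Set.Iic (√2 * l), (√(2 * π))⁻¹ * exp (-y ^ 2 / 2) =
      1 / 2 + (√π)⁻¹ * ∫ t in 0..l, exp (-t ^ 2) := by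
  have hf : Integrable (fun y : ℝ => exp (-y ^ 2 / 2)) := by
    convert integrable_exp_neg_mul_sq (by norm_num : (0 : ℝ) < 1 / 2) using 3
    ring
  have hIic : ∫ y in Set.Iic 0, exp (-y ^ 2 / 2) = √(2 * π) / 2 := by
    have h := integral_comp_neg_Iic 0 fun y => exp (-y ^ 2 / 2)
    simp only [neg_sq, neg_zero] at h
    rw [h]
    convert integral_gaussian_Ioi (1 / 2) using 3 <;> ring_nf
  have hsub : ∫ y in 0..√2 * l, exp (-y ^ 2 / 2) = √2 * ∫ t in 0..l, exp (-t ^ 2) := by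
    have h := intervalIntegral.integral_comp_mul_left (fun y => exp (-y ^ 2 / 2))
      (by positivity : √2 ≠ 0) (a := 0) (b := l)
    have hsq (t : ℝ) : exp (-(√2 * t) ^ 2 / 2) = exp (-t ^ 2) := by
      rw [mul_pow, sq_sqrt zero_le_two]
      ring_nf
    simp only [hsq, mul_zero, smul_eq_mul] at h
    rw [h, mul_inv_cancel_left₀ (by positivity)]
  rw [integral_const_mul, ← sub_add_cancel (∫ y in Set.Iic (√2 * l), exp (-y ^ 2 / 2))
    (∫ y in Set.Iic 0, exp (-y ^ 2 / 2)),
    intervalIntegral.integral_Iic_sub_Iic hf.integrableOn hf.integrableOn, hsub, hIic,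
    sqrt_mul zero_le_two]
  field_simp
  ring

theorem series_gamma_gaussian_general (l : ℝ) :
    HasSum (fun n : ℕ => l ^ n / Real.Gamma ((n + 2) / 2))
      (2 * Real.exp (l ^ 2) *
        ∫ y in Set.Iic (Real.sqrt 2 * l),
          (Real.sqrt (2 * π))⁻¹ * Real.exp (-y ^ 2 / 2)) := by
  have heven (k : ℕ) : Gamma ((((2 * k : ℕ) : ℝ) + 2) / 2) = k ! := by
    rw [← Gamma_nat_eq_factorial]
    push_cast
    ring_nf
  have hodd (k : ℕ) : (((2 * k + 1 : ℕ) : ℝ) + 2) / 2 = k + 3 / 2 := by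
    push_cast
    ring
  have h : HasSum (fun n : ℕ => l ^ n / Gamma ((n + 2) / 2))
      (exp (l ^ 2) + 2 / √π * exp (l ^ 2) * ∫ t in 0..l, exp (-t ^ 2)) := by
    refine HasSum.even_add_odd ?_ ?_
    · simpa only [heven] using hasSum_pow_two_mul_div_factorial l
    · simpa only [hodd] using hasSum_pow_two_mul_add_one_div_Gamma l
  rw [integral_Iic_gaussian_sqrt_two_mul]
  convert h using 1
  field_simp

/-- For every `λ ≥ 0`, the series `∑_{n=1}^∞ λ^{n-1}/Γ((n+1)/2)` converges and
equals `2 e^{λ²} ∫_{-∞}^{√2 λ} (1/√(2π)) e^{-y²/2} dy`. -/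
theorem series_gamma_gaussian (l : ℝ) (hl : 0 ≤ l) :
    HasSum (fun n : ℕ => l ^ n / Real.Gamma ((n + 2) / 2))
      (2 * Real.exp (l ^ 2) *
        ∫ y in Set.Iic (Real.sqrt 2 * l),
          (Real.sqrt (2 * π))⁻¹ * Real.exp (-y ^ 2 / 2)) :=
  series_gamma_gaussian_general l
end

section
/- For the Neumann Green's function of the cable equation, G^N_t(x,y) = e^{-αt} ∑_{n ∈ ℤ} (p_{βt}(x-y+2nL) + p_{βt}(x+y+2nL)), for every t > 0 and x, y ∈ [0,L] one has G^N_t(x,y) ≤ e^{-αt} p_{βt}(x-y) (4 + 4/(1 - e^{-L²/(βt)})). -/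
open MeasureTheory Real

/-- The one-dimensional Gaussian heat kernel. -/
noncomputable def heatKernel (t z : ℝ) : ℝ :=
  (Real.sqrt (2 * π * t))⁻¹ * Real.exp (-z ^ 2 / (2 * t))

lemma heatKernel_nonneg (t z : ℝ) : 0 ≤ heatKernel t z := by
  unfold heatKernel; positivity

lemma hk_le (s z w c : ℝ) (hs : 0 < s) (h : w ^ 2 + 2 * s * c ≤ z ^ 2) :
    heatKernel s z ≤ heatKernel s w * Real.exp (-c) := by
  unfold heatKernel
  rw [mul_assoc _ (Real.exp _) (Real.exp _), ← Real.exp_add]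
  have h3 : (0:ℝ) < 2 * s := by linarith
  have h2 : -z ^ 2 / (2 * s) ≤ -w ^ 2 / (2 * s) + -c := by
    rw [← sub_nonneg]
    have : -w ^ 2 / (2 * s) + -c - -z ^ 2 / (2 * s) = (z ^ 2 - w ^ 2 - 2 * s * c) / (2 * s) := by
      field_simp; ring
    rw [this]
    exact div_nonneg (by linarith) h3.le
  exact mul_le_mul_of_nonneg_left (Real.exp_le_exp.2 h2) (by positivity)

lemma exp_pow_eq (L s : ℝ) (k : ℕ) :
    Real.exp (-L ^ 2 / s) ^ k = Real.exp (-((k : ℝ) * (L ^ 2 / s))) := by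
  rw [← Real.exp_nat_mul]
  ring_nf

lemma term_bound1 (s L d : ℝ) (hs : 0 < s) (hL : 0 < L) (hd : |d| ≤ L) (n : ℤ) :
    heatKernel s (d + 2 * n * L)
      ≤ heatKernel s d * Real.exp (-L ^ 2 / s) ^ (n.natAbs - 1) := by
  rw [exp_pow_eq L s]
  apply hk_le s _ d _ hs
  have hc : 2 * s * (((n.natAbs - 1 : ℕ) : ℝ) * (L ^ 2 / s)) =
      2 * ((n.natAbs - 1 : ℕ) : ℝ) * L ^ 2 := by field_simp
  rw [hc]
  have hd0 : 0 ≤ |d| := abs_nonneg d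
  rcases Nat.eq_zero_or_pos n.natAbs with h0 | h1
  · have hn : n = 0 := Int.natAbs_eq_zero.mp h0
    subst hn
    simp
  · have hk1 : ((n.natAbs - 1 : ℕ) : ℝ) = (n.natAbs : ℝ) - 1 := by
      push_cast [Nat.cast_sub h1]; ring
    set μ : ℝ := (n.natAbs : ℝ) with hμdef
    have hμ1 : (1 : ℝ) ≤ μ := by rw [hμdef]; exact_mod_cast h1
    have habsn : |(n : ℝ)| = μ := by rw [hμdef, Nat.cast_natAbs, Int.cast_abs]
    have habs : 2 * μ * L - |d| ≤ |d + 2 * n * L| := by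
      have h4 : |2 * (n : ℝ) * L| ≤ |d + 2 * n * L| + |d| := by
        calc |2 * (n : ℝ) * L| = |(d + 2 * n * L) + (-d)| := by ring_nf
        _ ≤ |d + 2 * n * L| + |(-d)| := abs_add_le _ _
        _ = |d + 2 * n * L| + |d| := by rw [abs_neg]
      have h5 : |2 * (n : ℝ) * L| = 2 * μ * L := by
        rw [abs_mul, abs_mul, habsn, abs_of_pos hL]
        norm_num
      linarith
    have hpos : 0 ≤ 2 * μ * L - |d| := by nlinarith
    have hsq : (2 * μ * L - |d|) ^ 2 ≤ (d + 2 * n * L) ^ 2 := by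
      rw [← sq_abs (d + 2 * n * L)]
      exact pow_le_pow_left₀ hpos habs 2
    rw [hk1]
    nlinarith [sq_abs d, hsq,
      mul_le_mul_of_nonneg_left hd (by nlinarith : (0:ℝ) ≤ 4 * μ * L),
      mul_nonneg (mul_nonneg (by linarith : (0:ℝ) ≤ μ - 1)
        (by linarith : (0:ℝ) ≤ 4 * μ - 2)) (sq_nonneg L)]

lemma term_bound2 (s L e d : ℝ) (hs : 0 < s) (hL : 0 < L) (h0 : 0 ≤ e)
    (hde : d ^ 2 ≤ e ^ 2) (hd2 : |d| ≤ 2 * L - e) (n : ℤ) :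
    heatKernel s (e + 2 * n * L)
      ≤ heatKernel s d * Real.exp (-L ^ 2 / s) ^ (n.natAbs - 1) := by
  rw [exp_pow_eq L s]
  apply hk_le s _ d _ hs
  have hc : 2 * s * (((n.natAbs - 1 : ℕ) : ℝ) * (L ^ 2 / s)) =
      2 * ((n.natAbs - 1 : ℕ) : ℝ) * L ^ 2 := by field_simp
  rw [hc]
  have hd0 : 0 ≤ |d| := abs_nonneg d
  have he2 : e ≤ 2 * L := by linarith
  rcases lt_trichotomy n 0 with hn | hn | hn
  · -- n ≤ -1
    have h1 : 1 ≤ n.natAbs := by omega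
    have hk1 : ((n.natAbs - 1 : ℕ) : ℝ) = (n.natAbs : ℝ) - 1 := by
      push_cast [Nat.cast_sub h1]; ring
    set μ : ℝ := (n.natAbs : ℝ) with hμdef
    have hμ1 : (1 : ℝ) ≤ μ := by rw [hμdef]; exact_mod_cast h1
    have habsn : |(n : ℝ)| = μ := by rw [hμdef, Nat.cast_natAbs, Int.cast_abs]
    have hn' : (n : ℝ) < 0 := by exact_mod_cast hn
    have hcast : (n : ℝ) = -μ := by rw [← habsn, abs_of_neg hn']; ring
    have hzabs : |e + 2 * (n : ℝ) * L| = 2 * μ * L - e := by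
      rw [hcast, abs_of_nonpos (by nlinarith)]; ring
    have hlow : |d| + 2 * (μ - 1) * L ≤ 2 * μ * L - e := by linarith
    have hlow0 : 0 ≤ |d| + 2 * (μ - 1) * L := by nlinarith
    have hsq : (|d| + 2 * (μ - 1) * L) ^ 2 ≤ (e + 2 * n * L) ^ 2 := by
      rw [← sq_abs (e + 2 * n * L), hzabs]
      exact pow_le_pow_left₀ hlow0 hlow 2
    rw [hk1]
    rcases eq_or_lt_of_le h1 with heq | hgt
    · have : μ = 1 := by rw [hμdef, ← heq]; norm_num
      rw [this] at hsq ⊢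
      nlinarith [sq_abs d]
    · have hμ2 : (2 : ℝ) ≤ μ := by rw [hμdef]; exact_mod_cast hgt
      nlinarith [sq_abs d, hsq,
        mul_nonneg (mul_nonneg (by linarith : (0:ℝ) ≤ μ - 1) hd0) hL.le,
        mul_nonneg (mul_nonneg (by linarith : (0:ℝ) ≤ μ - 1)
          (by linarith : (0:ℝ) ≤ 4 * μ - 6)) (sq_nonneg L)]
  · subst hn; simpa using hde
  · -- n ≥ 1
    have h1 : 1 ≤ n.natAbs := by omega
    have hk1 : ((n.natAbs - 1 : ℕ) : ℝ) = (n.natAbs : ℝ) - 1 := by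
      push_cast [Nat.cast_sub h1]; ring
    set μ : ℝ := (n.natAbs : ℝ) with hμdef
    have hμ1 : (1 : ℝ) ≤ μ := by rw [hμdef]; exact_mod_cast h1
    have habsn : |(n : ℝ)| = μ := by rw [hμdef, Nat.cast_natAbs, Int.cast_abs]
    have hcast : (n : ℝ) = μ := by
      rw [← habsn, abs_of_pos (by exact_mod_cast hn)]
    rw [hk1, hcast]
    nlinarith [mul_nonneg (mul_nonneg (by linarith : (0:ℝ) ≤ μ) hL.le) h0,
      mul_nonneg (by linarith : (0:ℝ) ≤ μ) (sq_nonneg L),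
      mul_nonneg (mul_nonneg (by linarith : (0:ℝ) ≤ μ - 1)
        (by linarith : (0:ℝ) ≤ 4 * μ - 2)) (sq_nonneg L)]

/-- The Neumann Green's function of the cable equation on `[0,L]`. -/
noncomputable def greenNeumann (α β L t x y : ℝ) : ℝ :=
  Real.exp (-α * t) *
    ∑' n : ℤ, (heatKernel (β * t) (x - y + 2 * n * L) + heatKernel (β * t) (x + y + 2 * n * L))

/-- Gaussian upper bound for the Neumann Green's function. -/
theorem greenNeumann_upper_bound (α β L : ℝ) (hβ : 0 < β) (hL : 0 < L)
    (t : ℝ) (ht : 0 < t) (x y : ℝ) (hx : x ∈ Set.Icc 0 L) (hy : y ∈ Set.Icc 0 L) :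
    greenNeumann α β L t x y
      ≤ Real.exp (-α * t) * heatKernel (β * t) (x - y) *
          (4 + 4 / (1 - Real.exp (-L ^ 2 / (β * t)))) := by
  obtain ⟨hx0, hxL⟩ := hx
  obtain ⟨hy0, hyL⟩ := hy
  set s : ℝ := β * t with hsdef
  have hs : 0 < s := mul_pos hβ ht
  set d : ℝ := x - y with hddef
  set e : ℝ := x + y with hedef
  have hd : |d| ≤ L := abs_le.mpr ⟨by rw [hddef]; linarith, by rw [hddef]; linarith⟩
  have hde : d ^ 2 ≤ e ^ 2 := by rw [hddef, hedef]; nlinarith [mul_nonneg hx0 hy0]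
  have hd2 : |d| ≤ 2 * L - e := abs_le.mpr ⟨by rw [hddef, hedef]; linarith,
    by rw [hddef, hedef]; linarith⟩
  have h0e : 0 ≤ e := by rw [hedef]; linarith
  set q : ℝ := Real.exp (-L ^ 2 / s) with hqdef
  have hq0 : 0 ≤ q := Real.exp_nonneg _
  have hq1 : q < 1 := by
    rw [hqdef, Real.exp_lt_one_iff]
    have : 0 < L ^ 2 / s := by positivity
    rw [neg_div]
    linarith
  have h1q : 0 < 1 - q := by linarith
  -- summability of the geometric majorant
  have hs1 : Summable (fun n : ℕ => q ^ (n - 1)) := by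
    apply (summable_nat_add_iff 1).mp
    simpa using summable_geometric_of_lt_one hq0 hq1
  have hsgeo : Summable (fun n : ℕ => q ^ n) := summable_geometric_of_lt_one hq0 hq1
  have hgsum : Summable (fun n : ℤ => q ^ (n.natAbs - 1)) := by
    apply Summable.of_nat_of_neg
    · simpa using hs1
    · simpa using hs1
  set f : ℤ → ℝ := fun n =>
    heatKernel s (d + 2 * n * L) + heatKernel s (e + 2 * n * L) with hfdef
  set g : ℤ → ℝ := fun n => heatKernel s d * 2 * q ^ (n.natAbs - 1) with hgdef
  have hterm : ∀ n : ℤ, f n ≤ g n := by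
    intro n
    have h1 := term_bound1 s L d hs hL hd n
    have h2 := term_bound2 s L e d hs hL h0e hde hd2 n
    rw [hfdef, hgdef]
    simp only
    rw [← hqdef] at h1 h2
    nlinarith [h1, h2]
  have hgsum' : Summable g := by
    rw [hgdef]
    exact hgsum.mul_left _
  have hfsum : Summable f := by
    apply Summable.of_nonneg_of_le _ hterm hgsum'
    intro n
    exact add_nonneg (heatKernel_nonneg _ _) (heatKernel_nonneg _ _)
  have htsum : ∑' n : ℤ, f n ≤ ∑' n : ℤ, g n := Summable.tsum_le_tsum hterm hfsum hgsum'
  -- compute the tsum of g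
  have hT : ∑' n : ℤ, (q ^ (n.natAbs - 1) : ℝ) = 1 + 2 * (1 - q)⁻¹ := by
    have hnat : (fun n : ℕ => (q ^ ((n : ℤ).natAbs - 1) : ℝ)) = fun n : ℕ => q ^ (n - 1) := by
      funext n; congr 1
    have hneg : (fun n : ℕ => (q ^ ((-((n : ℤ) + 1)).natAbs - 1) : ℝ)) = fun n : ℕ => q ^ n := by
      funext n; congr 1
    have h2 : (fun b : ℕ => (q ^ (b + 1 - 1) : ℝ)) = fun b : ℕ => q ^ b := by
      funext b; congr 1
    rw [tsum_of_nat_of_neg_add_one (by rw [hnat]; exact hs1) (by rw [hneg]; exact hsgeo),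
      hnat, hneg, tsum_geometric_of_lt_one hq0 hq1, Summable.tsum_eq_zero_add hs1, h2,
      tsum_geometric_of_lt_one hq0 hq1]
    norm_num
    ring
  have hgval : ∑' n : ℤ, g n = heatKernel s d * 2 * (1 + 2 * (1 - q)⁻¹) := by
    rw [hgdef, tsum_mul_left, hT]
  rw [greenNeumann, ← hsdef, ← hddef, ← hedef]
  have hexp : 0 ≤ Real.exp (-α * t) := Real.exp_nonneg _
  have hhk : 0 ≤ heatKernel s d := heatKernel_nonneg _ _
  have key : Real.exp (-α * t) * ∑' n : ℤ, f n
      ≤ Real.exp (-α * t) * heatKernel s d * (4 + 4 / (1 - q)) := by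
    calc Real.exp (-α * t) * ∑' n : ℤ, f n
        ≤ Real.exp (-α * t) * ∑' n : ℤ, g n := mul_le_mul_of_nonneg_left htsum hexp
      _ = Real.exp (-α * t) * heatKernel s d * (2 + 4 * (1 - q)⁻¹) := by rw [hgval]; ring
      _ ≤ Real.exp (-α * t) * heatKernel s d * (4 + 4 / (1 - q)) := by
          apply mul_le_mul_of_nonneg_left _ (mul_nonneg hexp hhk)
          rw [div_eq_mul_inv]
          linarith
  exact key
end
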